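/- Let A and B be independent N×N real random matrices, and assume B is orthogonally invariant, i.e. u B uᵀ has the same distribution as B for every orthogonal matrix u. Let m : Mat(N,ℝ) → Mat(N,ℝ) be measurable with m(a)m(a)ᵀ = a aᵀ for all a. Then A B Aᵀ has the same distribution as m(A) B m(A)ᵀ. -/

import Mathlib

open MeasureTheory ProbabilityTheory Matrix Filter
open scoped ENNReal Topology

noncomputable section

/-- The space of `N × N` real matrices. -/
abbrev Mat (N : ℕ) := Matrix (Fin N) (Fin N) ℝ

instance (N : ℕ) : MeasurableSpace (Mat N) :=
  inferInstanceAs (MeasurableSpace (Fin N → Fin N → ℝ))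

instance (N : ℕ) : BorelSpace (Mat N) :=
  inferInstanceAs (BorelSpace (Fin N → Fin N → ℝ))

open scoped Classical in
/-- The eigenvalues of a matrix (junk value `0` if the matrix is not symmetric). -/
def eigs {N : ℕ} (s : Mat N) : Fin N → ℝ :=
  if h : s.IsHermitian then h.eigenvalues else fun _ => 0

/-- The largest eigenvalue of a symmetric matrix. -/
def lambdaMax {N : ℕ} (s : Mat N) : ℝ := ⨆ i, eigs s i

/-- The eigenvalues of a symmetric matrix in nonincreasing order:
`eigDesc s k` is the `(k+1)`-th largest eigenvalue `λ_{k+1}(s)`. -/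
def eigDesc {N : ℕ} (s : Mat N) (k : Fin N) : ℝ :=
  (eigs s ∘ Tuple.sort (eigs s)) k.rev

open scoped Classical in
/-- The positive semidefinite square root of a positive semidefinite matrix
(junk value `0` otherwise). -/
def msqrt {N : ℕ} (a : Mat N) : Mat N :=
  if h : a.PosSemidef then
    (h.1.eigenvectorUnitary : Mat N) *
      diagonal ((RCLike.ofReal : ℝ → ℝ) ∘ Real.sqrt ∘ h.1.eigenvalues) *
      (star (h.1.eigenvectorUnitary : Mat N))
  else 0

/-- `log⁺ x = max (log x) 0`. -/
def logPlus (x : ℝ) : ℝ := max (Real.log x) 0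

/-- The expectation of a (not necessarily integrable) real random variable, with values in
`[-∞, +∞]`: the difference of the lower integrals of the positive and negative parts. -/
def sInt {Ω : Type*} [MeasurableSpace Ω] (P : Measure Ω) (f : Ω → ℝ) : EReal :=
  ((∫⁻ ω, ENNReal.ofReal (f ω) ∂P : ℝ≥0∞) : EReal) -
    ((∫⁻ ω, ENNReal.ofReal (-f ω) ∂P : ℝ≥0∞) : EReal)

/-- `leftProd A n = A₁ ⋯ A_n` (`0`-indexed: `A 0 * A 1 * ⋯ * A (n-1)`). -/
def leftProd {Ω : Type*} {N : ℕ} (A : ℕ → Ω → Mat N) : ℕ → Ω → Mat N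
  | 0 => fun _ => 1
  | n + 1 => fun ω => leftProd A n ω * A n ω

/-- The top Lyapunov exponent
`γ = inf_{n ≥ 1} (1/n) E[log λ_max(A₁ ⋯ A_n A_nᵀ ⋯ A₁ᵀ)]`, a value in `[-∞, +∞)`. -/
def lyap {Ω : Type*} [MeasurableSpace Ω] {N : ℕ} (P : Measure Ω) (A : ℕ → Ω → Mat N) : EReal :=
  ⨅ n : ℕ, (((1 : ℝ) / (n + 1) : ℝ) : EReal) *
    sInt P (fun ω => Real.log (lambdaMax (leftProd A (n + 1) ω * (leftProd A (n + 1) ω)ᵀ)))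

/-- The `k × k` leading principal submatrix. -/
def subK {N k : ℕ} (hk : k ≤ N) (x : Mat N) : Mat k :=
  x.submatrix (Fin.castLE hk) (Fin.castLE hk)

end

/-! Since `m a * (m a)ᵀ = a * aᵀ`, the maps `v ↦ (m a)ᵀ v` and `v ↦ aᵀ v` have the same norms, so
an isometry of Euclidean space carries one to the other; its matrix is an orthogonal `u` with
`a = m a * u`. Then `a * b * aᵀ = m a * (u * b * uᵀ) * (m a)ᵀ`, and orthogonal invariance of the
law of `B` gives, for each fixed `a`, equality of the laws of `a * B * aᵀ` and `m a * B * (m a)ᵀ`.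
By independence the law of `(A, B)` is a product, and integrating over the law of `A` concludes. -/

theorem LinearMap.exists_linearIsometry_apply_eq_of_norm_eq {𝕜 V W : Type*} [RCLike 𝕜]
    [AddCommGroup V] [Module 𝕜 V] [NormedAddCommGroup W] [InnerProductSpace 𝕜 W]
    [FiniteDimensional 𝕜 W] (f g : V →ₗ[𝕜] W) (h : ∀ v, ‖f v‖ = ‖g v‖) :
    ∃ T : W →ₗᵢ[𝕜] W, ∀ v, T (g v) = f v := by
  have hker : LinearMap.ker g ≤ LinearMap.ker f := fun v hv => by
    rw [LinearMap.mem_ker, ← norm_eq_zero, h v, norm_eq_zero]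
    exact hv
  let L₀ : LinearMap.range g →ₗ[𝕜] W :=
    (LinearMap.ker g).liftQ f hker ∘ₗ g.quotKerEquivRange.symm.toLinearMap
  have hL₀ : ∀ v, L₀ ⟨g v, LinearMap.mem_range_self g v⟩ = f v := fun v => by
    simp [L₀, g.quotKerEquivRange_symm_apply_image]
  let L : LinearMap.range g →ₗᵢ[𝕜] W := ⟨L₀, by rintro ⟨_, v, rfl⟩; rw [hL₀, h]; rfl⟩
  exact ⟨L.extend, fun v => (L.extend_apply ⟨g v, LinearMap.mem_range_self g v⟩).trans (hL₀ v)⟩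

namespace Matrix

variable {𝕜 n : Type*} [RCLike 𝕜] [Fintype n] [DecidableEq n]

theorem adjoint_toEuclideanCLM_conjTranspose_comp (A : Matrix n n 𝕜) :
    ContinuousLinearMap.adjoint (toEuclideanCLM (𝕜 := 𝕜) Aᴴ) ∘L toEuclideanCLM (𝕜 := 𝕜) Aᴴ =
      toEuclideanCLM (𝕜 := 𝕜) (A * Aᴴ) := by
  rw [← ContinuousLinearMap.star_eq_adjoint, ← map_star, ← star_eq_conjTranspose, star_star,
    map_mul]
  rfl

theorem exists_mem_unitaryGroup_eq_mul_of_mul_conjTranspose_eq {X Y : Matrix n n 𝕜}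
    (h : X * Xᴴ = Y * Yᴴ) : ∃ u ∈ unitaryGroup n 𝕜, X = Y * u := by
  have hnorm (v : EuclideanSpace 𝕜 n) :
      ‖toEuclideanCLM (𝕜 := 𝕜) Xᴴ v‖ = ‖toEuclideanCLM (𝕜 := 𝕜) Yᴴ v‖ := by
    rw [ContinuousLinearMap.apply_norm_eq_sqrt_inner_adjoint_left,
      ContinuousLinearMap.apply_norm_eq_sqrt_inner_adjoint_left,
      adjoint_toEuclideanCLM_conjTranspose_comp, adjoint_toEuclideanCLM_conjTranspose_comp, h]
  obtain ⟨T, hT⟩ := LinearMap.exists_linearIsometry_apply_eq_of_norm_eq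
    (toEuclideanCLM (𝕜 := 𝕜) Xᴴ : EuclideanSpace 𝕜 n →ₗ[𝕜] EuclideanSpace 𝕜 n)
    (toEuclideanCLM (𝕜 := 𝕜) Yᴴ) hnorm
  obtain ⟨U, hTU⟩ :=
    EquivLike.surjective (toEuclideanCLM (n := n) (𝕜 := 𝕜)) T.toContinuousLinearMap
  have hU : star U * U = 1 := EquivLike.injective (toEuclideanCLM (n := n) (𝕜 := 𝕜)) <| by
    rw [map_mul, map_star, map_one, hTU, ContinuousLinearMap.star_eq_adjoint]
    exact T.adjoint_comp_self
  have hUY : U * Yᴴ = Xᴴ := EquivLike.injective (toEuclideanCLM (n := n) (𝕜 := 𝕜)) <| by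
    rw [map_mul, hTU]
    ext1 v
    exact hT v
  refine ⟨star U, Unitary.star_mem (mem_unitaryGroup_iff'.mpr hU), ?_⟩
  rw [← conjTranspose_conjTranspose X, ← hUY, conjTranspose_mul, conjTranspose_conjTranspose,
    star_eq_conjTranspose]

end Matrix

theorem MeasureTheory.Measure.map_prod_congr_of_map_curry_eq {α β γ : Type*}
    [MeasurableSpace α] [MeasurableSpace β] [MeasurableSpace γ] (μ : Measure α) {ν : Measure β}
    [SFinite ν] {F G : α × β → γ} (hF : Measurable F) (hG : Measurable G)
    (h : ∀ a, ν.map (Function.curry F a) = ν.map (Function.curry G a)) :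
    (μ.prod ν).map F = (μ.prod ν).map G := by
  ext s hs
  rw [Measure.map_apply hF hs, Measure.map_apply hG hs, Measure.prod_apply (hF hs),
    Measure.prod_apply (hG hs)]
  refine lintegral_congr fun a => ?_
  calc ν (Prod.mk a ⁻¹' (F ⁻¹' s))
      = ν.map (Function.curry F a) s :=
        (Measure.map_apply (hF.comp measurable_prodMk_left) hs).symm
    _ = ν.map (Function.curry G a) s := by rw [h a]
    _ = ν (Prod.mk a ⁻¹' (G ⁻¹' s)) := Measure.map_apply (hG.comp measurable_prodMk_left) hs

instance (N : ℕ) : SecondCountableTopology (Mat N) :=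
  inferInstanceAs (SecondCountableTopology (Fin N → Fin N → ℝ))

theorem map_conj_eq_of_mul_transpose_eq {N : ℕ} {ν : Measure (Mat N)}
    (hν : ∀ u ∈ orthogonalGroup (Fin N) ℝ, ν.map (fun b => u * b * uᵀ) = ν) {a c : Mat N}
    (h : a * aᵀ = c * cᵀ) :
    ν.map (fun b => a * b * aᵀ) = ν.map (fun b => c * b * cᵀ) := by
  -- over `ℝ`, `ᴴ` is `ᵀ` by definition
  obtain ⟨u, hu, rfl⟩ := exists_mem_unitaryGroup_eq_mul_of_mul_conjTranspose_eq h
  have hconj (v : Mat N) : Measurable fun b : Mat N => v * b * vᵀ := by fun_prop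
  calc ν.map (fun b => c * u * b * (c * u)ᵀ)
      = (ν.map fun b => u * b * uᵀ).map (fun b => c * b * cᵀ) := by
        rw [Measure.map_map (hconj c) (hconj u)]
        simp only [Function.comp_def, transpose_mul, Matrix.mul_assoc]
    _ = ν.map (fun b => c * b * cᵀ) := by rw [hν u hu]

/-- If `A` and `B` are independent and `B` is orthogonally invariant, then
for any measurable `m` with `m(a) m(a)ᵀ = a aᵀ` for all `a`, the random matrices `A B Aᵀ`
and `m(A) B m(A)ᵀ` have the same distribution. -/
theorem abat_eq_mat_dist
    {N : ℕ} {Ω : Type*} [MeasurableSpace Ω] (P : Measure Ω) [IsProbabilityMeasure P]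
    (A B : Ω → Mat N) (hA : Measurable A) (hB : Measurable B)
    (hindep : IndepFun A B P)
    (hBinv : ∀ u : Mat N, u * uᵀ = 1 →
      Measure.map (fun ω => u * B ω * uᵀ) P = Measure.map B P)
    (m : Mat N → Mat N) (hm : Measurable m) (hmm : ∀ a : Mat N, m a * (m a)ᵀ = a * aᵀ) :
    Measure.map (fun ω => A ω * B ω * (A ω)ᵀ) P
      = Measure.map (fun ω => m (A ω) * B ω * (m (A ω))ᵀ) P := by
  have hpair : P.map (fun ω => (A ω, B ω)) = (P.map A).prod (P.map B) :=
    (indepFun_iff_map_prod_eq_prod_map_map hA.aemeasurable hB.aemeasurable).mp hindep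
  have hBorth : ∀ u ∈ orthogonalGroup (Fin N) ℝ,
      (P.map B).map (fun b => u * b * uᵀ) = P.map B := fun u hu => by
    rw [Measure.map_map (by fun_prop) hB]
    exact hBinv u ((mem_orthogonalGroup_iff _ _).mp hu)
  have hF : Measurable fun p : Mat N × Mat N => p.1 * p.2 * p.1ᵀ := by fun_prop
  have hG : Measurable fun p : Mat N × Mat N => m p.1 * p.2 * (m p.1)ᵀ := by fun_prop
  calc P.map (fun ω => A ω * B ω * (A ω)ᵀ)
      = ((P.map A).prod (P.map B)).map fun p => p.1 * p.2 * p.1ᵀ := by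
        rw [← hpair, Measure.map_map hF (hA.prodMk hB)]
        rfl
    _ = ((P.map A).prod (P.map B)).map fun p => m p.1 * p.2 * (m p.1)ᵀ :=
        Measure.map_prod_congr_of_map_curry_eq _ hF hG fun a =>
          map_conj_eq_of_mul_transpose_eq hBorth (hmm a).symm
    _ = P.map (fun ω => m (A ω) * B ω * (m (A ω))ᵀ) := by
        rw [← hpair, Measure.map_map hG (hA.prodMk hB)]
        rfl
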